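/- arXiv:2109.00932 — 4 statements merged into one kernel-verified Lean document; each statement's English description precedes it below -/
import Mathlib

section
/- Let C be a triangulated category and X a Σ-stable full additive subcategory closed under direct summands. Then ξ_X is closed under base change: given a distinguished triangle A →f B →g C →h ΣA in ξ_X and a morphism ε: E → C, any distinguished triangle A →f' G →g' E →h' ΣA obtained by base change along ε (i.e. fitting in a morphism of triangles (id_A, β, ε) to the original triangle) also belongs to ξ_X. -/
open CategoryTheory CategoryTheory.Limits CategoryTheory.Pretriangulated

variable {C : Type*} [Category C] [Preadditive C] [HasZeroObject C] [HasShift C ℤ]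
  [∀ n : ℤ, (shiftFunctor C n).Additive] [Pretriangulated C] [HasBinaryBiproducts C]

theorem stmt_5 (X : Set C)
    (hzero : ∀ Z : C, IsZero Z → Z ∈ X)
    (hadd : ∀ A B : C, A ∈ X → B ∈ X → (A ⊞ B) ∈ X)
    (hshift : ∀ A : C, A ∈ X ↔ (A⟦(1 : ℤ)⟧) ∈ X)
    (hsummand : ∀ (P Q : C), Q ∈ X → ∀ (s : P ⟶ Q) (r : Q ⟶ P), s ≫ r = 𝟙 P → P ∈ X)
    {A B Z E G : C} (f : A ⟶ B) (g : B ⟶ Z) (h : Z ⟶ A⟦(1 : ℤ)⟧)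
    (hT : Triangle.mk f g h ∈ (distTriang C))
    (hx : ∀ X' ∈ X, Function.Surjective (fun u : X' ⟶ B => u ≫ g))
    (ε : E ⟶ Z) (f' : A ⟶ G) (g' : G ⟶ E) (h' : E ⟶ A⟦(1 : ℤ)⟧) (β : G ⟶ B)
    (hT' : Triangle.mk f' g' h' ∈ (distTriang C))
    (hsq1 : f' ≫ β = f) (hsq2 : g' ≫ ε = β ≫ g) (hsq3 : h' = ε ≫ h) :
    ∀ X' ∈ X, Function.Surjective (fun u : X' ⟶ G => u ≫ g') := by
  intro X' hX' v
  obtain ⟨w, hw⟩ := hx X' hX' (v ≫ ε)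
  have hv : v ≫ h' = 0 := by
    rw [hsq3, ← Category.assoc, ← hw]
    simp only [Category.assoc]
    rw [show g ≫ h = 0 from comp_distTriang_mor_zero₂₃ _ hT, comp_zero]
  obtain ⟨u, hu⟩ := Triangle.coyoneda_exact₃ _ hT' v hv
  exact ⟨u, hu.symm⟩
end

section
/- Let C be a triangulated category and X a Σ-stable full additive subcategory closed under direct summands. If X is contravariantly finite in C, then C has enough ξ_X-projectives and X = P(ξ_X). In particular, if P ∈ P(ξ_X), then any triangle K → X' → P → ΣK in ξ_X with X' ∈ X is split, so P is a direct summand of an object of X and hence P ∈ X. -/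
/-!
Every object of `X` is `ξ_X`-projective: surjectivity of `Hom(P, T.mor₂)` is built into
`ξ_X`, and injectivity of `Hom(P, T.mor₁)` follows from the long exact `Hom(P, -)`-sequence
of `T` once `P⟦1⟧ ∈ X`. Completing a right `X`-approximation `X' ⟶ A` to a distinguished
triangle gives a triangle in `ξ_X`, so there are enough projectives. If `P` is
`ξ_X`-projective, `𝟙 P` lifts along the second morphism of every `ξ_X`-triangle ending in `P`,
so that triangle splits; applied to an approximation `X' ⟶ P`, this makes `P` a summand of `X'`.
-/

open CategoryTheory CategoryTheory.Limits CategoryTheory.Pretriangulated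

variable {C : Type*} [Category C] [Preadditive C] [HasZeroObject C] [HasShift C ℤ]
  [∀ n : ℤ, (shiftFunctor C n).Additive] [Pretriangulated C] [HasBinaryBiproducts C]

/-- The class of `Hom(X,-)`-exact distinguished triangles. -/
def xiX (X : Set C) : Set (Triangle C) :=
  {T | T ∈ (distTriang C) ∧
    ∀ X' ∈ X, Function.Surjective (fun u : X' ⟶ T.obj₂ => u ≫ T.mor₂)}

/-- An object `P` is `ξ`-projective if `Hom(P, -)` sends every triangle in `ξ` to a
short exact sequence of abelian groups. -/
def IsXiProjective (ξ : Set (Triangle C)) (P : C) : Prop :=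
  ∀ T ∈ ξ,
    Function.Injective (fun u : P ⟶ T.obj₁ => u ≫ T.mor₁) ∧
    (∀ v : P ⟶ T.obj₁, (v ≫ T.mor₁) ≫ T.mor₂ = 0) ∧
    (∀ u : P ⟶ T.obj₂, u ≫ T.mor₂ = 0 → ∃ v : P ⟶ T.obj₁, v ≫ T.mor₁ = u) ∧
    Function.Surjective (fun u : P ⟶ T.obj₂ => u ≫ T.mor₂)

section

omit [HasBinaryBiproducts C]

lemma eq_zero_of_comp_mor₁_eq_zero {T : Triangle C} (hT : T ∈ distTriang C) {P : C}
    (hsurj : Function.Surjective (fun u : P⟦(1 : ℤ)⟧ ⟶ T.obj₂ => u ≫ T.mor₂))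
    {a : P ⟶ T.obj₁} (ha : a ≫ T.mor₁ = 0) : a = 0 := by
  obtain ⟨w, hw⟩ := Triangle.coyoneda_exact₁ T hT (a⟦(1 : ℤ)⟧')
    (by rw [← Functor.map_comp, ha, Functor.map_zero])
  obtain ⟨u, rfl⟩ := hsurj w
  rw [← Functor.map_eq_zero_iff (shiftFunctor C (1 : ℤ)), hw, Category.assoc,
    comp_distTriang_mor_zero₂₃ T hT, comp_zero]

lemma injective_comp_mor₁ {T : Triangle C} (hT : T ∈ distTriang C) {P : C}
    (hsurj : Function.Surjective (fun u : P⟦(1 : ℤ)⟧ ⟶ T.obj₂ => u ≫ T.mor₂)) :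
    Function.Injective (fun a : P ⟶ T.obj₁ => a ≫ T.mor₁) := fun a b hab =>
  sub_eq_zero.mp (eq_zero_of_comp_mor₁_eq_zero hT hsurj
    (by rw [Preadditive.sub_comp]; exact sub_eq_zero.mpr hab))

lemma isXiProjective_xiX_of_mem {X : Set C} {P : C} (hP : P ∈ X) (hP₁ : P⟦(1 : ℤ)⟧ ∈ X) :
    IsXiProjective (xiX X) P := by
  rintro T ⟨hT, hsurj⟩
  refine ⟨injective_comp_mor₁ hT (hsurj _ hP₁), fun v => ?_, fun u hu => ?_, hsurj P hP⟩
  · rw [Category.assoc, comp_distTriang_mor_zero₁₂ T hT, comp_zero]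
  · obtain ⟨v, hv⟩ := Triangle.coyoneda_exact₂ T hT u hu
    exact ⟨v, hv.symm⟩

lemma exists_mem_xiX_of_isRightApproximation {X : Set C} {X' A : C} (g : X' ⟶ A)
    (hg : ∀ X'' ∈ X, ∀ u : X'' ⟶ A, ∃ v : X'' ⟶ X', v ≫ g = u) :
    ∃ (K : C) (f : K ⟶ X') (h : A ⟶ K⟦(1 : ℤ)⟧), Triangle.mk f g h ∈ xiX X := by
  obtain ⟨K, f, h, hT⟩ := distinguished_cocone_triangle₁ g
  exact ⟨K, f, h, hT, hg⟩

omit [HasZeroObject C] [∀ n : ℤ, (shiftFunctor C n).Additive] [Pretriangulated C] in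
lemma IsXiProjective.exists_comp_mor₂_eq_id {ξ : Set (Triangle C)} {P : C}
    (hP : IsXiProjective ξ P) {K X' : C} {f : K ⟶ X'} {g : X' ⟶ P} {h : P ⟶ K⟦(1 : ℤ)⟧}
    (hT : Triangle.mk f g h ∈ ξ) : ∃ s : P ⟶ X', s ≫ g = 𝟙 P :=
  (hP _ hT).2.2.2 (𝟙 P)

lemma IsXiProjective.mor₃_eq_zero {X : Set C} {P : C} (hP : IsXiProjective (xiX X) P)
    {K X' : C} {f : K ⟶ X'} {g : X' ⟶ P} {h : P ⟶ K⟦(1 : ℤ)⟧}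
    (hT : Triangle.mk f g h ∈ xiX X) : h = 0 := by
  obtain ⟨s, hs⟩ := hP.exists_comp_mor₂_eq_id hT
  exact Triangle.mor₃_eq_zero_of_epi₂ _ hT.1 (SplitEpi.epi ⟨s, hs⟩)

end

theorem stmt_11_general (X : Set C)
    (hshift : ∀ A : C, A ∈ X ↔ (A⟦(1 : ℤ)⟧) ∈ X)
    (hsummand : ∀ (P Q : C), Q ∈ X → ∀ (s : P ⟶ Q) (r : Q ⟶ P), s ≫ r = 𝟙 P → P ∈ X)
    (hcf : ∀ Z : C, ∃ X' ∈ X, ∃ f : X' ⟶ Z,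
      ∀ X'' ∈ X, ∀ u : X'' ⟶ Z, ∃ v : X'' ⟶ X', v ≫ f = u) :
    (∀ A : C, ∃ (K P : C) (f : K ⟶ P) (g : P ⟶ A) (h : A ⟶ K⟦(1 : ℤ)⟧),
      Triangle.mk f g h ∈ xiX X ∧ IsXiProjective (xiX X) P) ∧
    (∀ P : C, IsXiProjective (xiX X) P ↔ P ∈ X) ∧
    (∀ P : C, IsXiProjective (xiX X) P →
      ∀ {K X' : C} (f : K ⟶ X') (g : X' ⟶ P) (h : P ⟶ K⟦(1 : ℤ)⟧),
        X' ∈ X → Triangle.mk f g h ∈ xiX X → h = 0) := by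
  have proj_of_mem {P : C} (hP : P ∈ X) : IsXiProjective (xiX X) P :=
    isXiProjective_xiX_of_mem hP ((hshift P).mp hP)
  refine ⟨fun A => ?_, fun P => ⟨fun hP => ?_, proj_of_mem⟩,
    fun P hP _ _ _ _ _ _ hT => hP.mor₃_eq_zero hT⟩
  · obtain ⟨X', hX', g, hg⟩ := hcf A
    obtain ⟨K, f, h, hT⟩ := exists_mem_xiX_of_isRightApproximation g hg
    exact ⟨K, X', f, g, h, hT, proj_of_mem hX'⟩
  · obtain ⟨X', hX', g, hg⟩ := hcf P
    obtain ⟨K, f, h, hT⟩ := exists_mem_xiX_of_isRightApproximation g hg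
    obtain ⟨s, hs⟩ := hP.exists_comp_mor₂_eq_id hT
    exact hsummand P X' hX' s g hs

theorem stmt_11 (X : Set C)
    (hzero : ∀ Z : C, IsZero Z → Z ∈ X)
    (hadd : ∀ A B : C, A ∈ X → B ∈ X → (A ⊞ B) ∈ X)
    (hshift : ∀ A : C, A ∈ X ↔ (A⟦(1 : ℤ)⟧) ∈ X)
    (hsummand : ∀ (P Q : C), Q ∈ X → ∀ (s : P ⟶ Q) (r : Q ⟶ P), s ≫ r = 𝟙 P → P ∈ X)
    (hcf : ∀ Z : C, ∃ X' ∈ X, ∃ f : X' ⟶ Z,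
      ∀ X'' ∈ X, ∀ u : X'' ⟶ Z, ∃ v : X'' ⟶ X', v ≫ f = u) :
    (∀ A : C, ∃ (K P : C) (f : K ⟶ P) (g : P ⟶ A) (h : A ⟶ K⟦(1 : ℤ)⟧),
      Triangle.mk f g h ∈ xiX X ∧ IsXiProjective (xiX X) P) ∧
    (∀ P : C, IsXiProjective (xiX X) P ↔ P ∈ X) ∧
    (∀ P : C, IsXiProjective (xiX X) P →
      ∀ {K X' : C} (f : K ⟶ X') (g : X' ⟶ P) (h : P ⟶ K⟦(1 : ℤ)⟧),
        X' ∈ X → Triangle.mk f g h ∈ xiX X → h = 0) :=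
  stmt_11_general X hshift hsummand hcf
end

section
/- Let C be a triangulated category and Y a Σ-stable full additive subcategory closed under direct summands. Then Y is covariantly finite in C if and only if C has enough ξ^Y-injectives and Y = I(ξ^Y). -/
open CategoryTheory CategoryTheory.Limits CategoryTheory.Pretriangulated

variable {C : Type*} [Category C] [Preadditive C] [HasZeroObject C] [HasShift C ℤ]
  [∀ n : ℤ, (shiftFunctor C n).Additive] [Pretriangulated C] [HasBinaryBiproducts C]

/-- The class of `Hom(-,Y)`-exact distinguished triangles. -/
def xiY (Y : Set C) : Set (Triangle C) :=
  {T | T ∈ (distTriang C) ∧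
    ∀ Y' ∈ Y, Function.Surjective (fun u : T.obj₂ ⟶ Y' => T.mor₁ ≫ u)}

/-- An object `I` is `ξ`-injective if `Hom(-, I)` sends every triangle in `ξ` to a
short exact sequence of abelian groups. -/
def IsXiInjective (ξ : Set (Triangle C)) (I : C) : Prop :=
  ∀ T ∈ ξ,
    Function.Injective (fun u : T.obj₃ ⟶ I => T.mor₂ ≫ u) ∧
    (∀ v : T.obj₃ ⟶ I, T.mor₁ ≫ T.mor₂ ≫ v = 0) ∧
    (∀ u : T.obj₂ ⟶ I, T.mor₁ ≫ u = 0 → ∃ v : T.obj₃ ⟶ I, T.mor₂ ≫ v = u) ∧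
    Function.Surjective (fun u : T.obj₂ ⟶ I => T.mor₁ ≫ u)

/-!
Every object of `Y` is `ξ^Y`-injective: surjectivity of `Hom(f, Y)` is the defining property
of `ξ^Y`, and since `Y` is `Σ`-stable it also holds against `Y⟦-1⟧`, which is exactly what
the long exact `Hom(-, Y)` sequence needs for injectivity at the third vertex. So a left
`Y`-approximation `A ⟶ Y'`, completed to a triangle, lies in `ξ^Y` and ends in a
`ξ^Y`-injective; and an `ξ^Y`-injective object splits off its approximation, hence is in `Y`.
Conversely, the first map of a `ξ^Y`-triangle `A ⟶ I` with `I ∈ Y = I(ξ^Y)` is a left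
`Y`-approximation by the very definition of `ξ^Y`.
-/

lemma shift_neg_one_mem {C : Type*} [Category C] [HasShift C ℤ] {Y : Set C}
    (hshift : ∀ A : C, A ∈ Y ↔ (A⟦(1 : ℤ)⟧) ∈ Y)
    (hsummand : ∀ (P Q : C), Q ∈ Y → ∀ (s : P ⟶ Q) (r : Q ⟶ P), s ≫ r = 𝟙 P → P ∈ Y)
    {I : C} (hI : I ∈ Y) : I⟦(-1 : ℤ)⟧ ∈ Y :=
  let e := (shiftFunctorCompIsoId C (-1 : ℤ) 1 (by norm_num)).app I
  (hshift _).2 (hsummand _ _ hI e.hom e.inv e.hom_inv_id)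

section

variable {C : Type*} [Category C] [Preadditive C] [HasZeroObject C] [HasShift C ℤ]
  [∀ n : ℤ, (shiftFunctor C n).Additive] [Pretriangulated C]

/- Every `t : T.obj₁⟦1⟧ ⟶ I` factors through `T.mor₁⟦1⟧`, which `T.mor₃` kills. -/
lemma comp_mor₂_injective (T : Triangle C) (hT : T ∈ distTriang C) {I : C}
    (h : Function.Surjective fun u : T.obj₂ ⟶ I⟦(-1 : ℤ)⟧ => T.mor₁ ≫ u) :
    Function.Injective fun v : T.obj₃ ⟶ I => T.mor₂ ≫ v := by
  intro v v' hvv'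
  rw [← sub_eq_zero]
  obtain ⟨t, ht⟩ := Triangle.yoneda_exact₃ T hT (v - v') (by
    simp only at hvv'
    rw [Preadditive.comp_sub, hvv', sub_self])
  let e : (I⟦(-1 : ℤ)⟧)⟦(1 : ℤ)⟧ ≅ I := (shiftFunctorCompIsoId C (-1) 1 (by norm_num)).app I
  obtain ⟨t', ht'⟩ := (shiftFunctor C (1 : ℤ)).map_surjective (t ≫ e.inv)
  obtain ⟨s, rfl⟩ := h t'
  have ht_factor : t = T.mor₁⟦(1 : ℤ)⟧' ≫ s⟦(1 : ℤ)⟧' ≫ e.hom := by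
    rw [← Functor.map_comp_assoc, ht', Category.assoc, e.inv_hom_id, Category.comp_id]
  rw [ht, ht_factor, ← Category.assoc, comp_distTriang_mor_zero₃₁ T hT, zero_comp]

variable {Y : Set C}

lemma isXiInjective_of_mem (hshift : ∀ A : C, A ∈ Y ↔ (A⟦(1 : ℤ)⟧) ∈ Y)
    (hsummand : ∀ (P Q : C), Q ∈ Y → ∀ (s : P ⟶ Q) (r : Q ⟶ P), s ≫ r = 𝟙 P → P ∈ Y)
    {I : C} (hI : I ∈ Y) : IsXiInjective (xiY Y) I := by
  rintro T ⟨hT, hsurj⟩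
  refine ⟨comp_mor₂_injective T hT (hsurj _ (shift_neg_one_mem hshift hsummand hI)),
    fun v ↦ ?_, fun u hu ↦ ?_, hsurj I hI⟩
  · rw [← Category.assoc, comp_distTriang_mor_zero₁₂ T hT, zero_comp]
  · obtain ⟨v, hv⟩ := Triangle.yoneda_exact₂ T hT u hu
    exact ⟨v, hv.symm⟩

/- The triangle on the approximation `f` lies in `ξ^Y`, so injectivity of `I` splits `f`. -/
lemma mem_of_isXiInjective
    (hsummand : ∀ (P Q : C), Q ∈ Y → ∀ (s : P ⟶ Q) (r : Q ⟶ P), s ≫ r = 𝟙 P → P ∈ Y)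
    {I Y' : C} (hY' : Y' ∈ Y) (f : I ⟶ Y')
    (hf : ∀ Y'' ∈ Y, Function.Surjective fun v : Y' ⟶ Y'' => f ≫ v)
    (hI : IsXiInjective (xiY Y) I) : I ∈ Y := by
  obtain ⟨K, g, h, hT⟩ := distinguished_cocone_triangle f
  obtain ⟨r, hr⟩ := (hI _ ⟨hT, hf⟩).2.2.2 (𝟙 I)
  exact hsummand I Y' hY' f r hr

end

theorem stmt_12_general (Y : Set C)
    (hshift : ∀ A : C, A ∈ Y ↔ (A⟦(1 : ℤ)⟧) ∈ Y)
    (hsummand : ∀ (P Q : C), Q ∈ Y → ∀ (s : P ⟶ Q) (r : Q ⟶ P), s ≫ r = 𝟙 P → P ∈ Y) :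
    (∀ Z : C, ∃ Y' ∈ Y, ∃ f : Z ⟶ Y',
      ∀ Y'' ∈ Y, ∀ u : Z ⟶ Y'', ∃ v : Y' ⟶ Y'', f ≫ v = u) ↔
    ((∀ A : C, ∃ (I K : C) (f : A ⟶ I) (g : I ⟶ K) (h : K ⟶ A⟦(1 : ℤ)⟧),
        Triangle.mk f g h ∈ xiY Y ∧ IsXiInjective (xiY Y) I) ∧
     (∀ I : C, I ∈ Y ↔ IsXiInjective (xiY Y) I)) := by
  constructor
  · intro happrox
    refine ⟨fun A ↦ ?_, fun I ↦ ⟨isXiInjective_of_mem hshift hsummand, fun hI ↦ ?_⟩⟩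
    · obtain ⟨Y', hY', f, hf⟩ := happrox A
      obtain ⟨K, g, h, hT⟩ := distinguished_cocone_triangle f
      exact ⟨Y', K, f, g, h, ⟨hT, hf⟩, isXiInjective_of_mem hshift hsummand hY'⟩
    · obtain ⟨Y', hY', f, hf⟩ := happrox I
      exact mem_of_isXiInjective hsummand hY' f hf hI
  · rintro ⟨henough, hY⟩ Z
    obtain ⟨I, K, f, g, h, ⟨-, hf⟩, hI⟩ := henough Z
    exact ⟨I, (hY I).2 hI, f, hf⟩

theorem stmt_12 (Y : Set C)
    (hzero : ∀ Z : C, IsZero Z → Z ∈ Y)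
    (hadd : ∀ A B : C, A ∈ Y → B ∈ Y → (A ⊞ B) ∈ Y)
    (hshift : ∀ A : C, A ∈ Y ↔ (A⟦(1 : ℤ)⟧) ∈ Y)
    (hsummand : ∀ (P Q : C), Q ∈ Y → ∀ (s : P ⟶ Q) (r : Q ⟶ P), s ≫ r = 𝟙 P → P ∈ Y) :
    (∀ Z : C, ∃ Y' ∈ Y, ∃ f : Z ⟶ Y',
      ∀ Y'' ∈ Y, ∀ u : Z ⟶ Y'', ∃ v : Y' ⟶ Y'', f ≫ v = u) ↔
    ((∀ A : C, ∃ (I K : C) (f : A ⟶ I) (g : I ⟶ K) (h : K ⟶ A⟦(1 : ℤ)⟧),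
        Triangle.mk f g h ∈ xiY Y ∧ IsXiInjective (xiY Y) I) ∧
     (∀ I : C, I ∈ Y ↔ IsXiInjective (xiY Y) I)) :=
  stmt_12_general Y hshift hsummand
end

section
/- Let C be a triangulated category and (X, Y) a balanced pair with associated proper class ξ := ξ_X = ξ^Y. If the extriangulated category (C, E_ξ, s_ξ) induced by restricting the triangulated structure to ξ is a triangulated category (i.e. ξ contains all distinguished triangles), then X = 0 and Y = 0. -/
open CategoryTheory CategoryTheory.Limits CategoryTheory.Pretriangulated

variable {C : Type*} [Category C] [Preadditive C] [HasZeroObject C] [HasShift C ℤ]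
  [∀ n : ℤ, (shiftFunctor C n).Additive] [Pretriangulated C] [HasBinaryBiproducts C]

/- The rotated contractible triangle `A ⟶ 0 ⟶ A⟦1⟧ ⟶ A⟦1⟧` is distinguished. If it lies in `ξ`,
then for a `ξ`-projective `P` the map `Hom(P, P) ⟶ Hom(P, 0)` is injective, so `𝟙 P = 0`; dually,
for a `ξ`-injective `I` the map `Hom(0, I) ⟶ Hom(I, I)` is surjective, so `𝟙 I` factors through `0`. -/

theorem IsXiProjective.isZero {C : Type*} [Category C] [Preadditive C] [HasZeroObject C]
    [HasShift C ℤ] {ξ : Set (Triangle C)} {P : C} (hP : IsXiProjective ξ P)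
    (hξ : (contractibleTriangle P).rotate ∈ ξ) : IsZero P := by
  rw [IsZero.iff_id_eq_zero]
  apply (hP _ hξ).1
  exact (isZero_zero C).eq_of_tgt _ _

theorem IsXiInjective.isZero {C : Type*} [Category C] [Preadditive C] [HasZeroObject C]
    [HasShift C ℤ] {ξ : Set (Triangle C)} {I : C} (hI : IsXiInjective ξ I)
    (hξ : (contractibleTriangle I).rotate ∈ ξ) : IsZero I := by
  obtain ⟨u, hu⟩ := (hI _ hξ).2.2.2 (𝟙 I)
  rw [IsZero.iff_id_eq_zero, ← hu]
  exact zero_comp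

theorem stmt_14_general (X Y : Set C)
    (hbal : xiX X = xiY Y)
    (hXP : ∀ P : C, P ∈ X ↔ IsXiProjective (xiX X) P)
    (hYI : ∀ I : C, I ∈ Y ↔ IsXiInjective (xiY Y) I)
    (hall : ∀ T : Triangle C, T ∈ (distTriang C) → T ∈ xiX X) :
    (∀ A ∈ X, IsZero A) ∧ (∀ A ∈ Y, IsZero A) := by
  have hrot (A : C) : (contractibleTriangle A).rotate ∈ xiX X :=
    hall _ (rot_of_distTriang _ (contractible_distinguished A))
  exact ⟨fun A hA => ((hXP A).1 hA).isZero (hrot A),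
    fun A hA => ((hYI A).1 hA).isZero (hbal ▸ hrot A)⟩

theorem stmt_14 (X Y : Set C)
    (hXzero : ∀ Z : C, IsZero Z → Z ∈ X) (hXadd : ∀ A B : C, A ∈ X → B ∈ X → (A ⊞ B) ∈ X)
    (hXshift : ∀ A : C, A ∈ X ↔ (A⟦(1 : ℤ)⟧) ∈ X)
    (hXsummand : ∀ (P Q : C), Q ∈ X → ∀ (s : P ⟶ Q) (r : Q ⟶ P), s ≫ r = 𝟙 P → P ∈ X)
    (hYzero : ∀ Z : C, IsZero Z → Z ∈ Y) (hYadd : ∀ A B : C, A ∈ Y → B ∈ Y → (A ⊞ B) ∈ Y)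
    (hYshift : ∀ A : C, A ∈ Y ↔ (A⟦(1 : ℤ)⟧) ∈ Y)
    (hYsummand : ∀ (P Q : C), Q ∈ Y → ∀ (s : P ⟶ Q) (r : Q ⟶ P), s ≫ r = 𝟙 P → P ∈ Y)
    (hbal : xiX X = xiY Y)
    (hXP : ∀ P : C, P ∈ X ↔ IsXiProjective (xiX X) P)
    (hYI : ∀ I : C, I ∈ Y ↔ IsXiInjective (xiY Y) I)
    (henoughP : ∀ A : C, ∃ (K P : C) (f : K ⟶ P) (g : P ⟶ A) (h : A ⟶ K⟦(1 : ℤ)⟧),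
      Triangle.mk f g h ∈ xiX X ∧ IsXiProjective (xiX X) P)
    (henoughI : ∀ A : C, ∃ (I K : C) (f : A ⟶ I) (g : I ⟶ K) (h : K ⟶ A⟦(1 : ℤ)⟧),
      Triangle.mk f g h ∈ xiX X ∧ IsXiInjective (xiX X) I)
    (hall : ∀ T : Triangle C, T ∈ (distTriang C) → T ∈ xiX X) :
    (∀ A ∈ X, IsZero A) ∧ (∀ A ∈ Y, IsZero A) :=
  stmt_14_general X Y hbal hXP hYI hall
end
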